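/- Suppose the Narayana number N_n is a concatenation of two repdigits, i.e., N_n = (1/9)(d1·10^{m1+m2} − (d1−d2)·10^{m2} − d2) with 1 ≤ d1 ≤ 9, 0 ≤ d2 ≤ 9, m1 ≥ m2 ≥ 1, and n > 250. Then |9a·α^n − d1·10^{m1+m2}| < 28·10^{m2}, where α is the real root of x³ − x² − 1 and a = α²/(α³+2). -/

import Mathlib

def narayana : ℕ → ℕ
  | 0 => 0
  | 1 => 1
  | 2 => 1
  | n + 3 => narayana (n + 2) + narayana n

/-!
The error `e k = N k - a α ^ k` satisfies the Narayana recurrence, and the choice of `a` kills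
its component along `α ^ k`, so `e` is a combination of `β ^ k` and `γ ^ k` for the two complex
roots `β, γ` of `x ^ 3 - x ^ 2 - 1`. Since `β + γ = 1 - α` and `β γ = 1 / α`, this means
`α e (k + 2) = (α - α ^ 2) e (k + 1) - e k`. The positive definite form
`Q(y, x) = α y ^ 2 + (α ^ 2 - α) y x + x ^ 2 = α |y - β x| ^ 2` then shrinks by the factor `α`
along `(e (k + 1), e k)`, so `|e k| ≤ 1` for all `k` follows from the initial values. The
estimate is this bound combined with `|(d₁ - d₂) 10 ^ m₂ + d₂| ≤ 9 · 10 ^ m₂ + 9`.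
-/

def narayanaForm (α y x : ℝ) : ℝ := α * y ^ 2 + (α ^ 2 - α) * y * x + x ^ 2

section NarayanaForm

variable {α : ℝ}

lemma sq_mul_le_narayanaForm (hα : 0 < α) (y x : ℝ) :
    (4 - α * (α - 1) ^ 2) * x ^ 2 ≤ 4 * narayanaForm α y x := by
  have hsq : 4 * α * narayanaForm α y x =
      (2 * α * y + (α ^ 2 - α) * x) ^ 2 + α * (4 - α * (α - 1) ^ 2) * x ^ 2 := by
    unfold narayanaForm; ring
  nlinarith [sq_nonneg (2 * α * y + (α ^ 2 - α) * x)]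

lemma narayanaForm_nonneg (hα : 0 < α) (hdisc : α * (α - 1) ^ 2 ≤ 4) (y x : ℝ) :
    0 ≤ narayanaForm α y x := by
  nlinarith [sq_mul_le_narayanaForm hα y x, mul_nonneg (sub_nonneg.2 hdisc) (sq_nonneg x)]

variable {e : ℕ → ℝ}

lemma two_term_rec_of_narayana_rec (hα : α ^ 3 = α ^ 2 + 1)
    (hrec : ∀ k, e (k + 3) = e (k + 2) + e k)
    (hinit : α * e 2 = (α - α ^ 2) * e 1 - e 0) :
    ∀ k, α * e (k + 2) = (α - α ^ 2) * e (k + 1) - e k := by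
  intro k
  induction k with
  | zero => exact hinit
  | succ k ih => linear_combination α * hrec k + α * ih - e (k + 1) * hα

lemma narayanaForm_succ (hrec : ∀ k, α * e (k + 2) = (α - α ^ 2) * e (k + 1) - e k) (k : ℕ) :
    α * narayanaForm α (e (k + 2)) (e (k + 1)) = narayanaForm α (e (k + 1)) (e k) := by
  unfold narayanaForm
  linear_combination (α * e (k + 2) - e k) * hrec k

lemma narayanaForm_le_initial (hα : 1 ≤ α) (hdisc : α * (α - 1) ^ 2 ≤ 4)
    (hrec : ∀ k, α * e (k + 2) = (α - α ^ 2) * e (k + 1) - e k) (k : ℕ) :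
    narayanaForm α (e (k + 1)) (e k) ≤ narayanaForm α (e 1) (e 0) := by
  induction k with
  | zero => rfl
  | succ k ih =>
    have hshift := narayanaForm_succ hrec k
    have hnonneg := narayanaForm_nonneg (by linarith) hdisc (e (k + 2)) (e (k + 1))
    nlinarith

lemma sq_mul_le_of_two_term_rec (hα : 1 ≤ α) (hdisc : α * (α - 1) ^ 2 ≤ 4)
    (hrec : ∀ k, α * e (k + 2) = (α - α ^ 2) * e (k + 1) - e k) (k : ℕ) :
    (4 - α * (α - 1) ^ 2) * e k ^ 2 ≤ 4 * narayanaForm α (e 1) (e 0) :=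
  (sq_mul_le_narayanaForm (by linarith) _ _).trans <|
    by linarith [narayanaForm_le_initial hα hdisc hrec k]

end NarayanaForm

lemma narayana_add_three_real (k : ℕ) :
    (narayana (k + 3) : ℝ) = narayana (k + 2) + narayana k := by
  rw [narayana, Nat.cast_add]

lemma narayana_root_bounds {α : ℝ} (hα : α ^ 3 = α ^ 2 + 1) : 7 / 5 < α ∧ α < 3 / 2 := by
  constructor
  · nlinarith [sq_nonneg (α - 7 / 5), sq_nonneg (α + 1), sq_nonneg α]
  · nlinarith [sq_nonneg (α - 3 / 2), sq_nonneg (α + 1), sq_nonneg α]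

def narayanaError (α a : ℝ) (k : ℕ) : ℝ := narayana k - a * α ^ k

section NarayanaError

variable {α a : ℝ}

lemma narayanaError_two_term_rec (hα : α ^ 3 = α ^ 2 + 1) (ha : a * (α ^ 3 + 2) = α ^ 2) (k : ℕ) :
    α * narayanaError α a (k + 2) =
      (α - α ^ 2) * narayanaError α a (k + 1) - narayanaError α a k := by
  refine two_term_rec_of_narayana_rec hα (fun k => ?_) ?_ k
  · simp only [narayanaError, narayana_add_three_real]
    linear_combination (-a * α ^ k) * hα
  · simp only [narayanaError, narayana]
    push_cast
    linear_combination (-a) * hα - ha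

lemma narayanaForm_narayanaError_initial_le (hα : α ^ 3 = α ^ 2 + 1)
    (ha : a * (α ^ 3 + 2) = α ^ 2) :
    narayanaForm α (narayanaError α a 1) (narayanaError α a 0) ≤ 1 / 2 := by
  obtain ⟨hα_lo, hα_hi⟩ := narayana_root_bounds hα
  have ha_lo : 39 / 100 < a := by nlinarith
  have ha_hi : a < 43 / 100 := by nlinarith
  have hval : narayanaForm α (narayanaError α a 1) (narayanaError α a 0) =
      α + a * α - a * α ^ 2 - 3 * a ^ 2 - a ^ 2 * α ^ 2 := by
    simp only [narayanaForm, narayanaError, narayana]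
    push_cast
    linear_combination 2 * a * ha
  rw [hval]
  nlinarith [mul_nonneg (by linarith : (0 : ℝ) ≤ a - 39 / 100) (by linarith : (0 : ℝ) ≤ α - 7 / 5),
    mul_nonneg (by linarith : (0 : ℝ) ≤ 43 / 100 - a) (by linarith : (0 : ℝ) ≤ 3 / 2 - α),
    sq_nonneg (a - 39 / 100), sq_nonneg (α - 7 / 5)]

lemma abs_narayanaError_le_one (hα : α ^ 3 = α ^ 2 + 1) (ha : a * (α ^ 3 + 2) = α ^ 2) (n : ℕ) :
    |narayanaError α a n| ≤ 1 := by
  obtain ⟨hα_lo, hα_hi⟩ := narayana_root_bounds hα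
  have hdisc : α * (α - 1) ^ 2 ≤ 1 / 2 := by nlinarith [sq_nonneg (α - 3 / 2)]
  have hsq := sq_mul_le_of_two_term_rec (by linarith) (by linarith)
    (narayanaError_two_term_rec hα ha) n
  have hinit := narayanaForm_narayanaError_initial_le hα ha
  rw [← sq_le_one_iff_abs_le_one]
  nlinarith

end NarayanaError

theorem first_estimate_general (α : ℝ) (hα : α ^ 3 = α ^ 2 + 1)
    (a : ℝ) (ha : a = α ^ 2 / (α ^ 3 + 2))
    (n d1 d2 m1 m2 : ℕ)
    (hd1' : d1 ≤ 9) (hd2 : d2 ≤ 9)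
    (heq : 9 * (narayana n : ℝ) =
      (d1 : ℝ) * 10 ^ (m1 + m2) - ((d1 : ℝ) - (d2 : ℝ)) * 10 ^ m2 - (d2 : ℝ)) :
    |9 * a * α ^ n - (d1 : ℝ) * 10 ^ (m1 + m2)| < 28 * 10 ^ m2 := by
  have ha' : a * (α ^ 3 + 2) = α ^ 2 := by
    rw [ha, div_mul_cancel₀ _ (by rw [hα]; positivity)]
  have herr := abs_le.1 (abs_narayanaError_le_one hα ha' n)
  have hpow : (1 : ℝ) ≤ 10 ^ m2 := one_le_pow₀ (by norm_num)
  have hd1r : (d1 : ℝ) ≤ 9 := by exact_mod_cast hd1'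
  have hd2r : (d2 : ℝ) ≤ 9 := by exact_mod_cast hd2
  have hd1r₀ : (0 : ℝ) ≤ d1 := d1.cast_nonneg
  have hd2r₀ : (0 : ℝ) ≤ d2 := d2.cast_nonneg
  have hdigits : |((d1 : ℝ) - d2) * 10 ^ m2| ≤ 9 * 10 ^ m2 := by
    rw [abs_mul, abs_of_pos (by positivity : (0 : ℝ) < 10 ^ m2)]
    gcongr
    exact abs_sub_le_iff.2 ⟨by linarith, by linarith⟩
  have hsplit : 9 * a * α ^ n - (d1 : ℝ) * 10 ^ (m1 + m2) =
      -(((d1 : ℝ) - d2) * 10 ^ m2) - d2 - 9 * narayanaError α a n := by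
    rw [narayanaError]
    linear_combination heq
  rw [hsplit, abs_lt]
  constructor <;> linarith [abs_le.1 hdigits]

/-- First key estimate: `|9 a α^n - d1 10^(m1+m2)| < 28 · 10^(m2)`. -/
theorem first_estimate (α : ℝ) (hα : α ^ 3 = α ^ 2 + 1)
    (a : ℝ) (ha : a = α ^ 2 / (α ^ 3 + 2))
    (n d1 d2 m1 m2 : ℕ) (hn : 250 < n)
    (hd1 : 1 ≤ d1) (hd1' : d1 ≤ 9) (hd2 : d2 ≤ 9) (hm : m2 ≤ m1) (hm2 : 1 ≤ m2)
    (heq : 9 * (narayana n : ℝ) =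
      (d1 : ℝ) * 10 ^ (m1 + m2) - ((d1 : ℝ) - (d2 : ℝ)) * 10 ^ m2 - (d2 : ℝ)) :
    |9 * a * α ^ n - (d1 : ℝ) * 10 ^ (m1 + m2)| < 28 * 10 ^ m2 :=
  first_estimate_general α hα a ha n d1 d2 m1 m2 hd1' hd2 heq
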